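/- arXiv:2104.04177 — 2 statements merged into one kernel-verified Lean document; each statement's English description precedes it below -/
import Mathlib

section
/- Let s be a positive integer, L a lattice of rank n with basis w₁,…,w_n, and u₁,…,u_N the distinct vectors in the dual L* of norm at most s. Then L is s-integrable (√s·L embeds isometrically into some ℤ^m) if and only if the system ∑_{k=1}^N ⟨wᵢ+w_j, u_k⟩² x_k = s⟨wᵢ+w_j, wᵢ+w_j⟩ for all 1 ≤ i, j ≤ n has a solution in non-negative integers (x₁,…,x_N). -/
/-!
An embedding `f` of `√s • L` in `ℤ^m` amounts to `m` vectors `σ t`, the coordinate functionals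
of `f` pulled back to `L ⊗ ℝ` and scaled by `√s`, forming a eutactic star of scale `s` and having
integral inner products with `L`. Each `σ t` then lies in `L*` and has norm at most `s` (one term
of `∑ t, ⟪v, σ t⟫ ^ 2` at `v = σ t` is bounded by the whole sum), so it is some `u k`, and `x k`
counts its repetitions. Conversely, listing each `u k` with multiplicity `x k` gives a family whose
eutactic identity holds at every `w i + w j`, hence everywhere by polarization, and the coordinates
`⟪v, σ t⟫ / √s` embed `L ⊗ ℝ` isometrically, sending `√s • w i` to integer vectors.
-/

open Finset
open scoped RealInnerProductSpace

theorem LinearMap.BilinForm.ext_basis_add {K M κ : Type*} [Field K] [CharZero K]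
    [AddCommGroup M] [Module K M] {B F : LinearMap.BilinForm K M} (hB : B.IsSymm)
    (hF : F.IsSymm) (b : Module.Basis κ K M)
    (h : ∀ i j, B (b i + b j) (b i + b j) = F (b i + b j) (b i + b j)) : B = F := by
  have hdiag : ∀ i, B (b i) (b i) = F (b i) (b i) := fun i => by
    have := h i i
    simp only [map_add, LinearMap.add_apply] at this
    linear_combination this / 4
  refine LinearMap.BilinForm.ext_basis b fun i j => ?_
  have := h i j
  simp only [map_add, LinearMap.add_apply, hB.eq (b j) (b i), hF.eq (b j) (b i)] at this
  linear_combination (this - hdiag i - hdiag j) / 2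

theorem Finset.sum_comp_eq_sum_card_fiber_nsmul {ι κ M : Type*} [Fintype ι] [Fintype κ]
    [DecidableEq κ] [AddCommMonoid M] (g : ι → κ) (f : κ → M) :
    ∑ i, f (g i) = ∑ j, #{i | g i = j} • f j := by
  rw [← Finset.sum_fiberwise' univ g f]
  simp

theorem exists_fin_sum_comp_eq_sum_nsmul {ι M : Type*} [Fintype ι] [AddCommMonoid M]
    (x : ι → ℕ) : ∃ (m : ℕ) (κ : Fin m → ι), ∀ f : ι → M, ∑ t, f (κ t) = ∑ k, x k • f k := by
  refine ⟨_, fun t => ((Fintype.equivFin (Σ k, Fin (x k))).symm t).1, fun f => ?_⟩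
  exact ((Fintype.equivFin _).symm.sum_comp (fun p : Σ k, Fin (x k) => f p.1)).trans
    (by simp [Fintype.sum_sigma])

section
variable {E ι : Type*} [NormedAddCommGroup E] [InnerProductSpace ℝ E] [Fintype ι]

def IsEutacticStar (σ : ι → E) (c : ℝ) : Prop :=
  ∀ v, ∑ t, ⟪v, σ t⟫ ^ 2 = c * ⟪v, v⟫

namespace IsEutacticStar
variable {σ : ι → E} {c : ℝ}

theorem smul (h : IsEutacticStar σ c) (a : ℝ) : IsEutacticStar (a • σ) (a ^ 2 * c) := fun v => by
  simp only [Pi.smul_apply, real_inner_smul_right, mul_pow, ← mul_sum, h v, mul_assoc]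

theorem inner_self_le (h : IsEutacticStar σ c) (hc : 0 ≤ c) (t : ι) : ⟪σ t, σ t⟫ ≤ c := by
  have hle : ⟪σ t, σ t⟫ ^ 2 ≤ c * ⟪σ t, σ t⟫ :=
    h (σ t) ▸ single_le_sum (f := fun t' => ⟪σ t, σ t'⟫ ^ 2) (fun _ _ => sq_nonneg _) (mem_univ t)
  nlinarith [real_inner_self_nonneg (x := σ t)]

theorem of_basis_add {κ : Type*} (b : Module.Basis κ ℝ E)
    (h : ∀ i j, ∑ t, ⟪b i + b j, σ t⟫ ^ 2 = c * ⟪b i + b j, b i + b j⟫) :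
    IsEutacticStar σ c := by
  let B : LinearMap.BilinForm ℝ E :=
    ∑ t, (LinearMap.mul ℝ ℝ).compl₁₂ ((innerₗ E).flip (σ t)) ((innerₗ E).flip (σ t))
  have hB : ∀ v v', B v v' = ∑ t, ⟪v, σ t⟫ * ⟪v', σ t⟫ := fun v v' => by simp [B, real_inner_comm]
  have hBc : B = c • innerₗ E := by
    refine LinearMap.BilinForm.ext_basis_add ⟨fun v v' => by simp only [hB, mul_comm]⟩
      ⟨fun v v' => by simp [real_inner_comm]⟩ b fun i j => ?_
    simpa only [hB, sq, LinearMap.smul_apply, innerₗ_apply_apply, smul_eq_mul] using h i j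
  intro v
  simpa [hB, sq] using LinearMap.congr_fun₂ hBc v v

theorem exists_linearIsometry (h : IsEutacticStar σ c) (hc : 0 < c) :
    ∃ g : E →ₗᵢ[ℝ] EuclideanSpace ℝ ι, ∀ v t, g v t = (√c)⁻¹ * ⟪v, σ t⟫ := by
  let g : E →ₗ[ℝ] EuclideanSpace ℝ ι := (WithLp.linearEquiv 2 ℝ (ι → ℝ)).symm.toLinearMap ∘ₗ
    LinearMap.pi fun t => (√c)⁻¹ • (innerₗ E).flip (σ t)
  have hg : ∀ v t, g v t = (√c)⁻¹ * ⟪v, σ t⟫ := fun v t => by simp [g, real_inner_comm]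
  refine ⟨⟨g, fun v => ?_⟩, hg⟩
  have hsq : ‖g v‖ ^ 2 = ‖v‖ ^ 2 := by
    rw [EuclideanSpace.norm_sq_eq, ← real_inner_self_eq_norm_sq]
    simp only [hg, Real.norm_eq_abs, sq_abs, mul_pow, ← mul_sum, h v, inv_pow, Real.sq_sqrt hc.le]
    field_simp
  exact (pow_left_inj₀ (norm_nonneg _) (norm_nonneg _) two_ne_zero).1 hsq

end IsEutacticStar

theorem LinearIsometry.exists_isEutacticStar [CompleteSpace E] (f : E →ₗᵢ[ℝ] EuclideanSpace ℝ ι) :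
    ∃ σ : ι → E, (∀ v t, ⟪v, σ t⟫ = f v t) ∧ IsEutacticStar σ 1 := by
  let σ : ι → E := fun t =>
    (InnerProductSpace.toDual ℝ E).symm ((EuclideanSpace.proj t).comp f.toContinuousLinearMap)
  have hσ : ∀ v t, ⟪v, σ t⟫ = f v t := fun v t => by
    rw [real_inner_comm, InnerProductSpace.toDual_symm_apply]; rfl
  refine ⟨σ, hσ, fun v => ?_⟩
  rw [one_mul, real_inner_self_eq_norm_sq, ← f.norm_map, EuclideanSpace.norm_sq_eq]
  simp [hσ]

end

theorem stmt_16_general (n N s : ℕ) (hs : 0 < s)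
    (w : Fin n → EuclideanSpace ℝ (Fin n)) (hli : LinearIndependent ℝ w)
    (u : Fin N → EuclideanSpace ℝ (Fin n))
    (hu : ∀ v : EuclideanSpace ℝ (Fin n),
      ((∀ i, ∃ k : ℤ, ⟪v, w i⟫ = (k : ℝ)) ∧ ⟪v, v⟫ ≤ s) ↔ ∃ k, v = u k) :
    (∃ (m : ℕ) (f : EuclideanSpace ℝ (Fin n) →ₗᵢ[ℝ] EuclideanSpace ℝ (Fin m)),
      ∀ i, ∀ t, ∃ k : ℤ, f (Real.sqrt s • w i) t = (k : ℝ)) ↔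
    (∃ x : Fin N → ℕ, ∀ i j,
      ∑ k, ⟪w i + w j, u k⟫ ^ 2 * (x k : ℝ) =
        s * ⟪w i + w j, w i + w j⟫) := by
  constructor
  · rintro ⟨m, f, hf⟩
    obtain ⟨σ, hσf, hσ⟩ := f.exists_isEutacticStar
    have hstar : IsEutacticStar (√s • σ) s := by
      simpa [Real.sq_sqrt (Nat.cast_nonneg s)] using hσ.smul √s
    have hinner : ∀ t i, ⟪(√s • σ) t, w i⟫ = f (√s • w i) t := fun t i => by
      rw [Pi.smul_apply, real_inner_smul_left, real_inner_comm, hσf, map_smul]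
      rfl
    have hdual : ∀ t, ∃ k, (√s • σ) t = u k := fun t => (hu _).1
      ⟨fun i => hinner t i ▸ hf i t, hstar.inner_self_le (Nat.cast_nonneg s) t⟩
    choose κ hκ using hdual
    refine ⟨fun k => #{t | κ t = k}, fun i j => ?_⟩
    calc ∑ k, ⟪w i + w j, u k⟫ ^ 2 * (#{t | κ t = k} : ℝ)
        = ∑ k, #{t | κ t = k} • ⟪w i + w j, u k⟫ ^ 2 := by simp only [nsmul_eq_mul, mul_comm]
      _ = ∑ t, ⟪w i + w j, u (κ t)⟫ ^ 2 := (sum_comp_eq_sum_card_fiber_nsmul κ _).symm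
      _ = s * ⟪w i + w j, w i + w j⟫ := by simpa only [← hκ] using hstar (w i + w j)
  · rintro ⟨x, hx⟩
    obtain ⟨m, κ, hκ⟩ := exists_fin_sum_comp_eq_sum_nsmul (M := ℝ) x
    let b := basisOfLinearIndependentOfCardEqFinrank' w hli (by simp)
    have hstar : IsEutacticStar (u ∘ κ) s := .of_basis_add b fun i j => by
      simpa only [b, coe_basisOfLinearIndependentOfCardEqFinrank', Function.comp_apply,
        hκ fun k => ⟪w i + w j, u k⟫ ^ 2, nsmul_eq_mul, mul_comm (x _ : ℝ)] using hx i j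
    obtain ⟨g, hg⟩ := hstar.exists_linearIsometry (by positivity)
    refine ⟨m, g, fun i t => ?_⟩
    obtain ⟨k, hk⟩ := ((hu (u (κ t))).2 ⟨_, rfl⟩).1 i
    refine ⟨k, ?_⟩
    rw [hg, Function.comp_apply, real_inner_smul_left, real_inner_comm, hk,
      inv_mul_cancel_left₀ (by positivity)]

/-- Let `L` be the lattice with basis `w₁,…,w_n` (integral inner products) and let
`u₁,…,u_N` be the distinct vectors of the dual `L*` of norm at most `s`.  Then `L` is
`s`-integrable (`√s·L` embeds isometrically in some `ℤ^m`) iff the system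
`∑_k ⟪wᵢ+w_j, u_k⟫² x_k = s⟪wᵢ+w_j, wᵢ+w_j⟫` has a solution in non-negative integers. -/
theorem stmt_16 (n N s : ℕ) (hs : 0 < s)
    (w : Fin n → EuclideanSpace ℝ (Fin n)) (hli : LinearIndependent ℝ w)
    (hint : ∀ i j, ∃ k : ℤ, ⟪w i, w j⟫ = (k : ℝ))
    (u : Fin N → EuclideanSpace ℝ (Fin n)) (hinj : Function.Injective u)
    (hu : ∀ v : EuclideanSpace ℝ (Fin n),
      ((∀ i, ∃ k : ℤ, ⟪v, w i⟫ = (k : ℝ)) ∧ ⟪v, v⟫ ≤ s) ↔ ∃ k, v = u k) :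
    (∃ (m : ℕ) (f : EuclideanSpace ℝ (Fin n) →ₗᵢ[ℝ] EuclideanSpace ℝ (Fin m)),
      ∀ i, ∀ t, ∃ k : ℤ, f (Real.sqrt s • w i) t = (k : ℝ)) ↔
    (∃ x : Fin N → ℕ, ∀ i j,
      ∑ k, ⟪w i + w j, u k⟫ ^ 2 * (x k : ℝ) =
        s * ⟪w i + w j, w i + w j⟫) :=
  stmt_16_general n N s hs w hli u hu
end

section
/- Let L be a unimodular lattice with minimal norm at least 2, and M a sublattice of L with Gram matrix [[3,2,0],[2,3,0],[0,0,3]]. Let M^⊥ be the orthogonal complement of M in L and ρ the orthogonal projection onto M^⊥ ⊗ ℚ. Then the minimum norm of the dual lattice (M^⊥)* is at least 16/15, and every nonzero w ∈ (M^⊥)* of norm at most 2 satisfies w = ρ(w') for some w' ∈ L of norm exactly 2. -/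
open scoped RealInnerProductSpace

/-- The dual lattice of a set `N` inside its rational span. -/
def dualLat {n : ℕ} (N : Set (EuclideanSpace ℝ (Fin n))) : Set (EuclideanSpace ℝ (Fin n)) :=
  {v | v ∈ Submodule.span ℚ N ∧ ∀ u ∈ N, ∃ k : ℤ, ⟪v, u⟫ = (k : ℝ)}

/-!
Write `M = ⟨w 0, w 1, w 2⟩`, `W = M ⊗ ℝ` and `N = L ∩ Wᗮ = M^⊥`. Since `L / N` is torsion-free,
`N` is a direct summand of `L`, so a vector `x ∈ N*` pairs integrally with `N` exactly like some
`z ∈ L` (extend the functional and use `L = L*`). Then `z - x ∈ W` pairs integrally with `M`,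
i.e. lies in `M*`, and subtracting a suitable element of `M` leaves a glue vector `m` of norm at
most `14/15`, the largest minimal norm of a coset of `M` in `M*`. Now `x + m ∈ L` is nonzero and
`‖x + m‖² = ‖x‖² + ‖m‖²`, so `‖x‖² ≥ 2 - 14/15`; if `‖x‖² ≤ 2` the integer `‖x + m‖²` is
below `3`, hence equal to `2`, and `x` is the projection of `x + m` onto `N ⊗ ℝ`.
-/

open Submodule

theorem LinearMap.exists_retraction_ker {R M P : Type*} [CommRing R] [IsDomain R]
    [IsPrincipalIdealRing R] [AddCommGroup M] [Module R M] [Module.Finite R M]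
    [AddCommGroup P] [Module R P] [Module.IsTorsionFree R P] (f : M →ₗ[R] P) :
    ∃ ψ : M →ₗ[R] ker f, ∀ x : ker f, ψ x = x := by
  obtain ⟨σ, hσ⟩ := f.rangeRestrict.exists_rightInverse_of_surjective f.range_rangeRestrict
  have hfσ (y : range f) : f (σ y) = y := congrArg Subtype.val (LinearMap.congr_fun hσ y)
  refine ⟨(LinearMap.id - σ ∘ₗ f.rangeRestrict).codRestrict (ker f) fun x => ?_, fun x => ?_⟩
  · apply Subtype.ext
    have : f.rangeRestrict x = 0 := Subtype.ext x.2
    simp [this]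
  · rw [LinearMap.mem_ker, LinearMap.sub_apply, map_sub, LinearMap.comp_apply, hfσ]
    simp

theorem zsmul_add_zsmul_add_zsmul_mem_span {A : Type*} [AddCommGroup A] (w : Fin 3 → A)
    (a b c : ℤ) : a • w 0 + b • w 1 + c • w 2 ∈ span ℤ (Set.range w) :=
  add_mem (add_mem (zsmul_mem (subset_span (Set.mem_range_self 0)) _)
    (zsmul_mem (subset_span (Set.mem_range_self 1)) _))
    (zsmul_mem (subset_span (Set.mem_range_self 2)) _)

theorem exists_quadForm_sub_le_three (k₀ k₁ : ℤ) : ∃ c₀ c₁ : ℤ,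
    3 * (k₀ - 3 * c₀ - 2 * c₁) ^ 2 - 4 * (k₀ - 3 * c₀ - 2 * c₁) * (k₁ - 2 * c₀ - 3 * c₁)
      + 3 * (k₁ - 2 * c₀ - 3 * c₁) ^ 2 ≤ 3 := by
  obtain ⟨t, s, hs, hs5, hk⟩ : ∃ t s : ℤ, 0 ≤ s ∧ s < 5 ∧ k₀ + k₁ = 5 * t + s :=
    ⟨(k₀ + k₁) / 5, (k₀ + k₁) % 5, by omega, by omega, by omega⟩
  -- with `c = (3t - k₁ + e₀, 3t - k₀ + e₁)` the residual `k - G c` depends only on `s` and `e`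
  have key (e₀ e₁ : ℤ) (h : 3 * (3 * s - 3 * e₀ - 2 * e₁) ^ 2
      - 4 * (3 * s - 3 * e₀ - 2 * e₁) * (3 * s - 2 * e₀ - 3 * e₁)
      + 3 * (3 * s - 2 * e₀ - 3 * e₁) ^ 2 ≤ 3) : ∃ c₀ c₁ : ℤ,
      3 * (k₀ - 3 * c₀ - 2 * c₁) ^ 2 - 4 * (k₀ - 3 * c₀ - 2 * c₁) * (k₁ - 2 * c₀ - 3 * c₁)
        + 3 * (k₁ - 2 * c₀ - 3 * c₁) ^ 2 ≤ 3 := by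
    refine ⟨3 * t - k₁ + e₀, 3 * t - k₀ + e₁, ?_⟩
    rwa [show k₀ - 3 * (3 * t - k₁ + e₀) - 2 * (3 * t - k₀ + e₁) = 3 * s - 3 * e₀ - 2 * e₁ by
        linarith,
      show k₁ - 2 * (3 * t - k₁ + e₀) - 3 * (3 * t - k₀ + e₁) = 3 * s - 2 * e₀ - 3 * e₁ by
        linarith]
  interval_cases s
  exacts [key 0 0 (by norm_num), key 1 0 (by norm_num), key 1 1 (by norm_num),
    key 2 2 (by norm_num), key 2 3 (by norm_num)]

theorem exists_sq_sub_three_mul_le_one (k : ℤ) : ∃ c : ℤ, (k - 3 * c) ^ 2 ≤ 1 :=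
  ⟨(k + 1) / 3, by nlinarith [show -1 ≤ k - 3 * ((k + 1) / 3) ∧ k - 3 * ((k + 1) / 3) ≤ 1 by omega]⟩

section InnerProductSpace

variable {E : Type*} [NormedAddCommGroup E] [InnerProductSpace ℝ E]

theorem mem_orthogonal_span_iff (s : Set E) (v : E) :
    v ∈ (span ℝ s)ᗮ ↔ ∀ u ∈ s, ⟪v, u⟫ = 0 := by
  refine ⟨fun h u hu => (mem_orthogonal' _ _).1 h _ (subset_span hu), fun h => ?_⟩
  rw [mem_orthogonal']
  intro u hu
  induction hu using span_induction with
  | mem u hu => exact h u hu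
  | zero => simp
  | add u u' _ _ hu hu' => simp [inner_add_right, hu, hu']
  | smul c u _ hu => simp [inner_smul_right, hu]

theorem discreteTopology_of_forall_inner_self_eq_intCast (L : Submodule ℤ E)
    (hint : ∀ v ∈ L, ∃ k : ℤ, ⟪v, v⟫ = k) : DiscreteTopology L := by
  refine .of_forall_le_norm one_pos fun v hv => ?_
  obtain ⟨k, hk⟩ := hint v v.2
  have hpos : (0 : ℝ) < k := hk ▸ real_inner_self_pos.2 (by simpa using hv)
  have hk1 : (1 : ℝ) ≤ k := by exact_mod_cast (show (0 : ℤ) < k by exact_mod_cast hpos)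
  have hsq : (1 : ℝ) ≤ ‖(v : E)‖ ^ 2 := by rw [← real_inner_self_eq_norm_sq, hk]; exact hk1
  exact le_of_pow_le_pow_left₀ two_ne_zero (norm_nonneg _) (by simpa using hsq)

variable [FiniteDimensional ℝ E]

theorem exists_inner_eq_of_isZLattice (L : Submodule ℤ E) [DiscreteTopology L] [IsZLattice ℝ L]
    (φ : L →ₗ[ℤ] ℝ) : ∃ z : E, ∀ l : L, ⟪z, l⟫ = φ l := by
  let b := Module.Free.chooseBasis ℤ L
  let F : E →ₗ[ℝ] ℝ := (b.ofZLatticeBasis ℝ L).constr ℝ fun i => φ (b i)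
  refine ⟨(InnerProductSpace.toDual ℝ E).symm F.toContinuousLinearMap, fun l => ?_⟩
  rw [InnerProductSpace.toDual_symm_apply, LinearMap.coe_toContinuousLinearMap']
  show (F.restrictScalars ℤ ∘ₗ L.subtype) l = φ l
  congr 1
  refine b.ext fun i => ?_
  rw [LinearMap.comp_apply, LinearMap.restrictScalars_apply, subtype_apply,
    ← Module.Basis.ofZLatticeBasis_apply ℝ L b i, Module.Basis.constr_basis]

theorem exists_mem_inner_eq_of_forall_inner_mem_int (L : Submodule ℤ E)
    (hspan : span ℝ (L : Set E) = ⊤)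
    (hdual : ∀ v, v ∈ L ↔ ∀ u ∈ L, ∃ k : ℤ, ⟪v, u⟫ = k) (K : Submodule ℝ E) {x : E}
    (hx : ∀ u ∈ L, u ∈ K → ∃ k : ℤ, ⟪x, u⟫ = k) :
    ∃ z ∈ L, ∀ u ∈ L, u ∈ K → ⟪z, u⟫ = ⟪x, u⟫ := by
  have := discreteTopology_of_forall_inner_self_eq_intCast L fun v hv => (hdual v).1 hv v hv
  have : IsZLattice ℝ L := ⟨hspan⟩
  have : Module.IsTorsionFree ℤ (E ⧸ K) := .trans_faithfulSMul ℤ ℝ (E ⧸ K)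
  let f : L →ₗ[ℤ] E ⧸ K := K.mkQ.restrictScalars ℤ ∘ₗ L.subtype
  have hf (l : L) : l ∈ LinearMap.ker f ↔ (l : E) ∈ K := by
    simp [f, Quotient.mk_eq_zero]
  obtain ⟨ψ, hψ⟩ := f.exists_retraction_ker
  obtain ⟨z, hz⟩ := exists_inner_eq_of_isZLattice L
    ((innerₛₗ ℝ x).restrictScalars ℤ ∘ₗ L.subtype ∘ₗ (LinearMap.ker f).subtype ∘ₗ ψ)
  refine ⟨z, (hdual z).2 fun u hu => ?_, fun u hu huK => ?_⟩
  · rw [hz ⟨u, hu⟩]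
    exact hx _ (ψ _).1.2 ((hf _).1 (ψ _).2)
  · rw [hz ⟨u, hu⟩]
    simp [hψ ⟨⟨u, hu⟩, (hf _).2 huK⟩]

theorem span_inter_orthogonal_eq (L : Submodule ℤ E) (hspan : span ℝ (L : Set E) = ⊤)
    (W : Submodule ℝ E) (hW : ∀ l ∈ L, ∃ d : ℤ, d ≠ 0 ∧ d • W.starProjection l ∈ L) :
    span ℝ {v | v ∈ L ∧ v ∈ Wᗮ} = Wᗮ := by
  refine le_antisymm (span_le.2 fun v hv => hv.2) fun v hv => ?_
  let T : E →ₗ[ℝ] E := LinearMap.id - W.starProjection.toLinearMap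
  have hTv : T v = v := by simp [T, W.starProjection_apply_eq_zero_iff.2 hv]
  have hmem : v ∈ map T (span ℝ L) := hTv ▸ mem_map_of_mem (hspan ▸ mem_top)
  rw [map_span] at hmem
  refine span_le.2 ?_ hmem
  rintro _ ⟨l, hl, rfl⟩
  obtain ⟨d, hd, hdl⟩ := hW l hl
  have hTl : T l = (d : ℝ)⁻¹ • (d • l - d • W.starProjection l) := by
    rw [← smul_sub, ← Int.cast_smul_eq_zsmul ℝ, inv_smul_smul₀ (Int.cast_ne_zero.2 hd)]
    rfl
  rw [hTl]
  refine smul_mem _ _ (subset_span ⟨L.sub_mem (L.smul_mem d hl) hdl, ?_⟩)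
  rw [← smul_sub]
  exact Wᗮ.smul_of_tower_mem d (W.sub_starProjection_mem_orthogonal l)

end InnerProductSpace

section GramMatrix

variable {E : Type*} [NormedAddCommGroup E] [InnerProductSpace ℝ E]

/-- The coefficients are `G⁻¹ (⟪w i, v⟫)ᵢ` for the Gram matrix `G = !![3,2,0;2,3,0;0,0,3]`. -/
noncomputable def projM (w : Fin 3 → E) (v : E) : E :=
  ((3 * ⟪w 0, v⟫ - 2 * ⟪w 1, v⟫) / 5) • w 0 + ((3 * ⟪w 1, v⟫ - 2 * ⟪w 0, v⟫) / 5) • w 1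
    + (⟪w 2, v⟫ / 3) • w 2

variable {w : Fin 3 → E}

theorem zsmul_projM_mem_span {v : E} (hint : ∀ i, ∃ k : ℤ, ⟪w i, v⟫ = k) :
    (15 : ℤ) • projM w v ∈ span ℤ (Set.range w) := by
  obtain ⟨k₀, hk₀⟩ := hint 0
  obtain ⟨k₁, hk₁⟩ := hint 1
  obtain ⟨k₂, hk₂⟩ := hint 2
  have h : (15 : ℤ) • projM w v
      = (9 * k₀ - 6 * k₁) • w 0 + (9 * k₁ - 6 * k₀) • w 1 + (5 * k₂) • w 2 := by
    simp only [projM, hk₀, hk₁, hk₂, ← Int.cast_smul_eq_zsmul ℝ]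
    push_cast
    module
  rw [h]
  exact zsmul_add_zsmul_add_zsmul_mem_span w _ _ _

variable [FiniteDimensional ℝ E]

theorem starProjection_span_range_eq_projM
    (hGram : ∀ i j, ⟪w i, w j⟫ = (!![3, 2, 0; 2, 3, 0; 0, 0, 3] : Matrix (Fin 3) (Fin 3) ℝ) i j)
    (v : E) : (span ℝ (Set.range w)).starProjection v = projM w v := by
  refine eq_starProjection_of_mem_of_inner_eq_zero ?_ fun u hu => ?_
  · exact add_mem (add_mem (smul_mem _ _ (subset_span (Set.mem_range_self 0)))
      (smul_mem _ _ (subset_span (Set.mem_range_self 1))))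
      (smul_mem _ _ (subset_span (Set.mem_range_self 2)))
  · refine (mem_orthogonal' _ _).1 ((mem_orthogonal_span_iff _ _).2 ?_) u hu
    rintro _ ⟨i, rfl⟩
    rw [real_inner_comm]
    obtain rfl | rfl | rfl : i = 0 ∨ i = 1 ∨ i = 2 := by fin_cases i <;> simp
    all_goals
      simp only [projM, inner_sub_right, inner_add_right, inner_smul_right, hGram]
      norm_num [Matrix.cons_val_two] <;> ring

theorem inner_self_eq_of_mem_span_range
    (hGram : ∀ i j, ⟪w i, w j⟫ = (!![3, 2, 0; 2, 3, 0; 0, 0, 3] : Matrix (Fin 3) (Fin 3) ℝ) i j)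
    {m : E} (hm : m ∈ span ℝ (Set.range w)) :
    ⟪m, m⟫ = (3 * ⟪w 0, m⟫ ^ 2 - 4 * ⟪w 0, m⟫ * ⟪w 1, m⟫ + 3 * ⟪w 1, m⟫ ^ 2) / 5
      + ⟪w 2, m⟫ ^ 2 / 3 := by
  have hproj : ⟪m, m⟫ = ⟪projM w m, m⟫ := by
    rw [← starProjection_span_range_eq_projM hGram, starProjection_eq_self_iff.2 hm]
  rw [hproj]
  simp only [projM, inner_add_left, inner_smul_left, conj_trivial]
  ring

theorem exists_sub_mem_span_int_inner_self_le
    (hGram : ∀ i j, ⟪w i, w j⟫ = (!![3, 2, 0; 2, 3, 0; 0, 0, 3] : Matrix (Fin 3) (Fin 3) ℝ) i j)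
    {m : E} (hm : m ∈ span ℝ (Set.range w)) (hint : ∀ i, ∃ k : ℤ, ⟪w i, m⟫ = k) :
    ∃ D ∈ span ℤ (Set.range w), ⟪m - D, m - D⟫ ≤ 14 / 15 := by
  obtain ⟨k₀, hk₀⟩ := hint 0
  obtain ⟨k₁, hk₁⟩ := hint 1
  obtain ⟨k₂, hk₂⟩ := hint 2
  obtain ⟨c₀, c₁, hc⟩ := exists_quadForm_sub_le_three k₀ k₁
  obtain ⟨c₂, hc₂⟩ := exists_sq_sub_three_mul_le_one k₂
  set D : E := (c₀ : ℝ) • w 0 + (c₁ : ℝ) • w 1 + (c₂ : ℝ) • w 2 with hD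
  have hDℤ : D ∈ span ℤ (Set.range w) := by
    simp only [hD, Int.cast_smul_eq_zsmul]
    exact zsmul_add_zsmul_add_zsmul_mem_span w _ _ _
  refine ⟨D, hDℤ, ?_⟩
  have hmD : m - D ∈ span ℝ (Set.range w) := sub_mem hm (span_le_restrictScalars ℤ ℝ _ hDℤ)
  have e₀ : ⟪w 0, m - D⟫ = k₀ - 3 * c₀ - 2 * c₁ := by
    simp only [hD, inner_sub_right, inner_add_right, inner_smul_right, hGram, hk₀]
    norm_num [Matrix.cons_val_two]; ring
  have e₁ : ⟪w 1, m - D⟫ = k₁ - 2 * c₀ - 3 * c₁ := by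
    simp only [hD, inner_sub_right, inner_add_right, inner_smul_right, hGram, hk₁]
    norm_num [Matrix.cons_val_two]; ring
  have e₂ : ⟪w 2, m - D⟫ = k₂ - 3 * c₂ := by
    simp only [hD, inner_sub_right, inner_add_right, inner_smul_right, hGram, hk₂]
    norm_num [Matrix.cons_val_two]; ring
  rw [inner_self_eq_of_mem_span_range hGram hmD, e₀, e₁, e₂]
  have hcℝ : 3 * ((k₀ : ℝ) - 3 * c₀ - 2 * c₁) ^ 2
      - 4 * ((k₀ : ℝ) - 3 * c₀ - 2 * c₁) * (k₁ - 2 * c₀ - 3 * c₁)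
      + 3 * ((k₁ : ℝ) - 2 * c₀ - 3 * c₁) ^ 2 ≤ 3 := by exact_mod_cast hc
  have hc₂ℝ : ((k₂ : ℝ) - 3 * c₂) ^ 2 ≤ 1 := by exact_mod_cast hc₂
  linarith

theorem exists_add_mem_of_forall_inner_mem_int (L : Submodule ℤ E)
    (hspan : span ℝ (L : Set E) = ⊤) (hdual : ∀ v, v ∈ L ↔ ∀ u ∈ L, ∃ k : ℤ, ⟪v, u⟫ = k)
    (hw : ∀ i, w i ∈ L)
    (hGram : ∀ i j, ⟪w i, w j⟫ = (!![3, 2, 0; 2, 3, 0; 0, 0, 3] : Matrix (Fin 3) (Fin 3) ℝ) i j)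
    {x : E} (hxS : x ∈ span ℝ {v | v ∈ L ∧ ∀ i, ⟪v, w i⟫ = 0})
    (hxℤ : ∀ u ∈ {v | v ∈ L ∧ ∀ i, ⟪v, w i⟫ = 0}, ∃ k : ℤ, ⟪x, u⟫ = k) :
    ∃ m ∈ (span ℝ {v | v ∈ L ∧ ∀ i, ⟪v, w i⟫ = 0})ᗮ, x + m ∈ L ∧ ⟪m, m⟫ ≤ 14 / 15 := by
  set W := span ℝ (Set.range w)
  have hperpW (v : E) : v ∈ Wᗮ ↔ ∀ i, ⟪v, w i⟫ = 0 := by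
    simp [W, mem_orthogonal_span_iff]
  have hS : {v | v ∈ L ∧ ∀ i, ⟪v, w i⟫ = 0} = {v | v ∈ L ∧ v ∈ Wᗮ} := by
    simp_rw [hperpW]
  have hMℤ : span ℤ (Set.range w) ≤ L := span_le.2 (Set.range_subset_iff.2 hw)
  have hSW : span ℝ {v | v ∈ L ∧ ∀ i, ⟪v, w i⟫ = 0} = Wᗮ := by
    refine hS ▸ span_inter_orthogonal_eq L hspan W fun l hl => ⟨15, by norm_num, ?_⟩
    rw [starProjection_span_range_eq_projM hGram]
    exact hMℤ (zsmul_projM_mem_span fun i => (hdual (w i)).1 (hw i) l hl)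
  rw [hSW] at hxS ⊢
  rw [orthogonal_orthogonal]
  obtain ⟨z, hzL, hz⟩ := exists_mem_inner_eq_of_forall_inner_mem_int L hspan hdual Wᗮ
    fun u hu huW => hxℤ u (hS ▸ ⟨hu, huW⟩)
  have hzx : z - x ∈ W := by
    rw [← orthogonal_orthogonal W, ← hSW, mem_orthogonal_span_iff]
    rintro u ⟨hu, huW⟩
    rw [inner_sub_left, hz u hu ((hperpW u).2 huW), sub_self]
  have hxw (i : Fin 3) : ⟪w i, x⟫ = 0 := by rw [real_inner_comm]; exact (hperpW x).1 hxS i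
  obtain ⟨D, hD, hzxD⟩ := exists_sub_mem_span_int_inner_self_le hGram hzx fun i => by
    simpa [inner_sub_right, hxw i] using (hdual (w i)).1 (hw i) z hzL
  refine ⟨z - x - D, sub_mem hzx (span_le_restrictScalars ℤ ℝ _ hD), ?_, hzxD⟩
  rw [show x + (z - x - D) = z - D by abel]
  exact L.sub_mem hzL (hMℤ hD)

end GramMatrix

theorem exists_mem_orthogonalProjectionOnto_eq_of_mem_dualLat {n : ℕ}
    (L : Submodule ℤ (EuclideanSpace ℝ (Fin n)))
    (hspan : span ℝ (L : Set (EuclideanSpace ℝ (Fin n))) = ⊤)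
    (hdual : ∀ v, v ∈ L ↔ ∀ u ∈ L, ∃ k : ℤ, ⟪v, u⟫ = k)
    (hmin : ∀ v ∈ L, v ≠ 0 → (2 : ℝ) ≤ ⟪v, v⟫) {w : Fin 3 → EuclideanSpace ℝ (Fin n)}
    (hw : ∀ i, w i ∈ L)
    (hGram : ∀ i j, ⟪w i, w j⟫ = (!![3, 2, 0; 2, 3, 0; 0, 0, 3] : Matrix (Fin 3) (Fin 3) ℝ) i j)
    {x : EuclideanSpace ℝ (Fin n)} (hx : x ∈ dualLat {v | v ∈ L ∧ ∀ i, ⟪v, w i⟫ = 0})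
    (hx0 : x ≠ 0) :
    ∃ y ∈ L, 2 ≤ ⟪y, y⟫ ∧ ⟪y, y⟫ ≤ ⟪x, x⟫ + 14 / 15 ∧
      ((span ℝ {v | v ∈ L ∧ ∀ i, ⟪v, w i⟫ = 0}).orthogonalProjectionOnto y :
        EuclideanSpace ℝ (Fin n)) = x := by
  obtain ⟨hxℚ, hxℤ⟩ := hx
  have hxS := span_le_restrictScalars ℚ ℝ _ hxℚ
  obtain ⟨m, hm, hxm, hm14⟩ :=
    exists_add_mem_of_forall_inner_mem_int L hspan hdual hw hGram hxS hxℤ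
  have hxm0 : ⟪x, m⟫ = 0 := inner_right_of_mem_orthogonal hxS hm
  have hne : x + m ≠ 0 := by
    intro h
    have hxx : ⟪x, x + m⟫ = ⟪x, x⟫ := by rw [inner_add_right, hxm0, add_zero]
    rw [h, inner_zero_right] at hxx
    exact hx0 (inner_self_eq_zero.1 hxx.symm)
  refine ⟨x + m, hxm, hmin _ hxm hne, ?_, ?_⟩
  · rw [real_inner_add_add_self, hxm0]
    linarith
  · rw [map_add, orthogonalProjectionOnto_apply_of_mem_orthogonal hm, add_zero,
      orthogonalProjectionOnto_mem_subspace_eq_self ⟨x, hxS⟩]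

/-- Let `L` be a unimodular lattice of minimal norm at least 2 and `M = ⟨w 0, w 1, w 2⟩ ≤ L`
a sublattice with Gram matrix `!![3,2,0;2,3,0;0,0,3]`.  With `M^⊥` the orthogonal
complement of `M` in `L` and `ρ` the orthogonal projection onto `M^⊥ ⊗ ℚ` (its real span),
every nonzero `x ∈ (M^⊥)*` has norm at least `16/15`, and if moreover its norm is at
most `2` then `x = ρ(x')` for some `x' ∈ L` of norm exactly `2`. -/
theorem stmt_18 (n : ℕ) (L : Submodule ℤ (EuclideanSpace ℝ (Fin n)))
    (hfull : Submodule.span ℝ (L : Set (EuclideanSpace ℝ (Fin n))) = ⊤)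
    (huni : ∀ v : EuclideanSpace ℝ (Fin n),
      v ∈ L ↔ ∀ u ∈ L, ∃ k : ℤ, ⟪v, u⟫ = (k : ℝ))
    (hmin : ∀ v ∈ L, v ≠ (0 : EuclideanSpace ℝ (Fin n)) → (2 : ℝ) ≤ ⟪v, v⟫)
    (w : Fin 3 → EuclideanSpace ℝ (Fin n)) (hw : ∀ i, w i ∈ L)
    (hGram : ∀ i j, ⟪w i, w j⟫ = (!![3, 2, 0; 2, 3, 0; 0, 0, 3] : Matrix (Fin 3) (Fin 3) ℝ) i j) :
    (∀ x ∈ dualLat {v | v ∈ L ∧ ∀ i, ⟪v, w i⟫ = 0},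
      x ≠ (0 : EuclideanSpace ℝ (Fin n)) → 16 / 15 ≤ ⟪x, x⟫) ∧
    (∀ x ∈ dualLat {v | v ∈ L ∧ ∀ i, ⟪v, w i⟫ = 0},
      x ≠ (0 : EuclideanSpace ℝ (Fin n)) → ⟪x, x⟫ ≤ 2 →
      ∃ x' ∈ L, ⟪x', x'⟫ = (2 : ℝ) ∧
        ((Submodule.orthogonalProjectionOnto
            (Submodule.span ℝ {v | v ∈ L ∧ ∀ i, ⟪v, w i⟫ = 0}) x' :
          EuclideanSpace ℝ (Fin n)) = x)) := by
  have key {x} := exists_mem_orthogonalProjectionOnto_eq_of_mem_dualLat (x := x)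
    L hfull huni hmin hw hGram
  refine ⟨fun x hx hx0 => ?_, fun x hx hx0 hx2 => ?_⟩
  · obtain ⟨y, -, hy2, hyx, -⟩ := key hx hx0
    linarith
  · obtain ⟨y, hy, hy2, hyx, hproj⟩ := key hx hx0
    obtain ⟨k, hk⟩ := (huni y).1 hy y hy
    have hk2 : k = 2 := by
      have h2 : (2 : ℤ) ≤ k := by exact_mod_cast hk ▸ hy2
      have h3 : k < 3 := by exact_mod_cast (show (k : ℝ) < 3 by linarith)
      omega
    exact ⟨y, hy, by rw [hk, hk2, Int.cast_ofNat], hproj⟩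
end
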